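/- Let G be a progressive graph with a linear order ≺ on E(G) satisfying condition (P1). Then (G, ≺) is a POP-graph (i.e., ≺ also satisfies (P2)) if and only if ≺ satisfies conditions (U2) and (P3). -/

import Mathlib

variable {V E : Type}

/-- Edge reachability `e1 → e2`: a directed path of edges `f_0, …, f_k` with `k ≥ 1`,
`f_0 = e1`, `f_k = e2` and `t f_{i-1} = s f_i`. -/
def eReach (s t : E → V) : E → E → Prop :=
  Relation.TransGen (fun a b => t a = s b)

/-- Vertex reachability `v → w`: a directed path from `v` to `w` using at least one edge. -/
def vReach (s t : E → V) : V → V → Prop :=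
  Relation.TransGen (fun v w => ∃ e, s e = v ∧ t e = w)

/-- A directed graph is acyclic if no vertex reaches itself. -/
def Acyclic (s t : E → V) : Prop := ∀ v, ¬ vReach s t v v

/-- `I(v)`: incoming edges of `v`. -/
def inE (t : E → V) (v : V) : Set E := {e | t e = v}

/-- `O(v)`: outgoing edges of `v`. -/
def outE (s : E → V) (v : V) : Set E := {e | s e = v}

/-- Convex hull `X̄` of `X` in the linear order `le`: the interval `{y | X^- ≤ y ≤ X^+}`
(empty when `X` is empty). -/
def hull (le : E → E → Prop) (X : Set E) : Set E :=
  {y | ∃ a ∈ X, ∃ b ∈ X, le a y ∧ le y b}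

/-- The strict order associated to a linear order `le`. -/
def ltOf (le : E → E → Prop) (a b : E) : Prop := le a b ∧ a ≠ b

/-- A source: no incoming edges. -/
def IsSource (t : E → V) (v : V) : Prop := inE t v = ∅

/-- A sink: no outgoing edges. -/
def IsSink (s : E → V) (v : V) : Prop := outE s v = ∅

/-- A progressive graph: acyclic and every source and every sink has degree 1. -/
def Progressive (s t : E → V) : Prop :=
  Acyclic s t ∧
  ∀ v, (IsSource t v ∨ IsSink s v) → ({e | s e = v ∨ t e = v} : Set E).ncard = 1

/-- `I(G)`: input edges, those whose source vertex is a source of `G`. -/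
def inputE (s t : E → V) : Set E := {e | IsSource t (s e)}

/-- `O(G)`: output edges, those whose target vertex is a sink of `G`. -/
def outputE (s t : E → V) : Set E := {e | IsSink s (t e)}

/-- Condition (U1) = (P1): `e1 → e2` implies `e1 ≺ e2`. -/
def U1 (s t : E → V) (le : E → E → Prop) : Prop :=
  ∀ e1 e2, eReach s t e1 e2 → ltOf le e1 e2

/-- Condition (U2): for every vertex `v`, `Ī(v) ∩ Ō(v) = ∅` and `Ē(v) = Ī(v) ∪ Ō(v)`. -/
def U2 (s t : E → V) (le : E → E → Prop) : Prop :=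
  ∀ v, hull le (inE t v) ∩ hull le (outE s v) = ∅ ∧
    hull le (inE t v ∪ outE s v) = hull le (inE t v) ∪ hull le (outE s v)

/-- Condition (U3). -/
def U3 (s t : E → V) (le : E → E → Prop) : Prop :=
  ∀ v1 v2,
    ((inE t v1 ∩ hull le (inE t v2)).Nonempty →
      hull le (inE t v1) ⊆ hull le (inE t v2)) ∧
    ((outE s v1 ∩ hull le (outE s v2)).Nonempty →
      hull le (outE s v1) ⊆ hull le (outE s v2))

/-- Condition (U4): for every progressive vertex `v`, `I(G) ∩ Ō(v) = ∅` and `O(G) ∩ Ī(v) = ∅`. -/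
def U4 (s t : E → V) (le : E → E → Prop) : Prop :=
  ∀ v, ¬ IsSource t v → ¬ IsSink s v →
    inputE s t ∩ hull le (outE s v) = ∅ ∧ outputE s t ∩ hull le (inE t v) = ∅

/-- An upward planar order: a linear order on the edges satisfying (U1), (U2), (U3). -/
def IsUPO (s t : E → V) (le : E → E → Prop) : Prop :=
  IsLinearOrder E le ∧ U1 s t le ∧ U2 s t le ∧ U3 s t le

/-- Condition (P2). -/
def P2 (s t : E → V) (le : E → E → Prop) : Prop :=
  ∀ e1 e2 e3, ltOf le e1 e2 → ltOf le e2 e3 → eReach s t e1 e3 →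
    eReach s t e1 e2 ∨ eReach s t e2 e3

/-- Condition (P̃2). -/
def P2t (s t : E → V) (le : E → E → Prop) : Prop :=
  ∀ e1 e2 e3, ltOf le e1 e2 → ltOf le e2 e3 → t e1 = s e3 →
    eReach s t e1 e2 ∨ eReach s t e2 e3

/-- Condition (P3) (for distinct vertices). -/
def P3 (s t : E → V) (le : E → E → Prop) : Prop :=
  ∀ v1 v2, v1 ≠ v2 →
    ((inE t v1 ∩ hull le (inE t v2)).Nonempty → vReach s t v1 v2) ∧
    ((outE s v1 ∩ hull le (outE s v2)).Nonempty → vReach s t v2 v1)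

/-- Condition (A): for distinct `v1 v2`, `∅ ≠ Ī(v1) ⊆ Ī(v2)` implies `v1 → v2`,
and `∅ ≠ Ō(v1) ⊆ Ō(v2)` implies `v2 → v1`. -/
def CondA (s t : E → V) (le : E → E → Prop) : Prop :=
  ∀ v1 v2, v1 ≠ v2 →
    ((hull le (inE t v1)).Nonempty → hull le (inE t v1) ⊆ hull le (inE t v2) →
      vReach s t v1 v2) ∧
    ((hull le (outE s v1)).Nonempty → hull le (outE s v1) ⊆ hull le (outE s v2) →
      vReach s t v2 v1)

/-- A POP-graph: a progressive graph with a planar order ((P1) and (P2)). -/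
def IsPOP (s t : E → V) (le : E → E → Prop) : Prop :=
  Progressive s t ∧ IsLinearOrder E le ∧ U1 s t le ∧ P2 s t le

/-- `U(v) = {w | Ō(v) ⊊ Ō(w)}` when `O(v) ≠ ∅`, and `U(v) = ∅` otherwise. -/
def Uset (s : E → V) (le : E → E → Prop) (v : V) : Set V :=
  {w | (outE s v).Nonempty ∧ hull le (outE s v) ⊂ hull le (outE s w)}

/-- `D(v) = {w | Ī(v) ⊊ Ī(w)}` when `I(v) ≠ ∅`, and `D(v) = ∅` otherwise. -/
def Dset (t : E → V) (le : E → E → Prop) (v : V) : Set V :=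
  {w | (inE t v).Nonempty ∧ hull le (inE t v) ⊂ hull le (inE t w)}

/-- A CPP-extension of `G = (s, t)`: a POP-graph `(s', t', le')` with an embedding
`(φ0, φ1)` satisfying (E1)–(E4). -/
def IsCPP {V' E' : Type} (s t : E → V) (s' t' : E' → V')
    (le' : E' → E' → Prop) (φ0 : V → V') (φ1 : E → E') : Prop :=
  Function.Injective φ0 ∧ Function.Injective φ1 ∧
  (∀ e, s' (φ1 e) = φ0 (s e)) ∧ (∀ e, t' (φ1 e) = φ0 (t e)) ∧
  IsPOP s' t' le' ∧
  -- (E1)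
  Set.range φ0 = {v : V' | ¬ IsSource t' v ∧ ¬ IsSink s' v} ∧
  -- (E2)
  Nat.card E' = Nat.card E + ({v : V | IsSource t v}).ncard + ({v : V | IsSink s v}).ncard ∧
  -- (E3)
  (∀ v w, IsSource t v → IsSink s w → inE t' (φ0 v) ∩ outE s' (φ0 w) = ∅) ∧
  -- (E4)
  (∀ e' : E', e' ∉ Set.range φ1 → e' ∉ inputE s' t' → e' ∉ outputE s' t' →
    ((∃ a ∈ outE s' (s' e'), ltOf le' a e') ∧ (∃ b ∈ outE s' (s' e'), ltOf le' e' b)) ∨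
    ((∃ a ∈ inE t' (t' e'), ltOf le' a e') ∧ (∃ b ∈ inE t' (t' e'), ltOf le' e' b)))

/-!
By (P1) the hulls `Ī(v)` and `Ō(v)` are always disjoint. Given (P2), an edge `y` strictly between
an incoming edge `a` and an outgoing edge `b` of `v` satisfies `a → y` or `y → b`, and the first
(last) edge of such a path puts `y` into `Ō(v)` (`Ī(v)`); this gives (U2). For (P3), an edge
`e ∈ I(v₁)` lying in `Ī(v₂)` forces two incoming edges at `v₂`, so `v₂` is not a sink and has an
outgoing edge `f`; in (P2) for `a ≺ e ≺ f` with `a ∈ I(v₂)`, `a → e` would put `e` into `Ō(v₂)`,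
so `e → f`, i.e. `v₁ → v₂`.
Conversely, (U2) and (P3) give (P2) when `e₁ → e₃` is a single step `t e₁ = s e₃`, and this case
propagates to arbitrary paths by induction along the path.
-/

section Reach

variable {s t : E → V}

theorem eReach_iff_eq_or_vReach {e f : E} :
    eReach s t e f ↔ t e = s f ∨ vReach s t (t e) (s f) := by
  constructor
  · intro h
    induction h with
    | single h => exact Or.inl h
    | @tail b c _ hbc ih =>
      rcases ih with h | h
      · exact Or.inr (.single ⟨b, h.symm, hbc⟩)
      · exact Or.inr (h.tail ⟨b, rfl, hbc⟩)
  · rintro (h | h)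
    · exact .single h
    · suffices ∀ w, vReach s t (t e) w → ∀ f, s f = w → eReach s t e f from this _ h f rfl
      intro w hw
      induction hw with
      | single h =>
        obtain ⟨g, hg, hg'⟩ := h
        exact fun f hf => (.tail (.single hg.symm) (hg'.trans hf.symm) : eReach s t e f)
      | tail _ h ih =>
        obtain ⟨g, hg, hg'⟩ := h
        exact fun f hf => (ih g hg).tail (hg'.trans hf.symm)

theorem Progressive.not_isSource_or_isSink (hprog : Progressive s t) {v : V} {a b : E}
    (ha : s a = v ∨ t a = v) (hb : s b = v ∨ t b = v) (hab : a ≠ b) :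
    ¬ (IsSource t v ∨ IsSink s v) := by
  intro hv
  obtain ⟨x, hx⟩ := Set.ncard_eq_one.1 (hprog.2 v hv)
  have ha' : a ∈ ({e | s e = v ∨ t e = v} : Set E) := ha
  have hb' : b ∈ ({e | s e = v ∨ t e = v} : Set E) := hb
  rw [hx, Set.mem_singleton_iff] at ha' hb'
  exact hab (ha'.trans hb'.symm)

end Reach

section Hull

variable {le : E → E → Prop}

theorem hull_mono {X Y : Set E} (h : X ⊆ Y) : hull le X ⊆ hull le Y :=
  fun _ ⟨a, ha, b, hb, hay, hyb⟩ => ⟨a, h ha, b, h hb, hay, hyb⟩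

theorem subset_hull [Std.Refl le] (X : Set E) : X ⊆ hull le X :=
  fun x hx => ⟨x, hx, x, hx, refl_of le x, refl_of le x⟩

variable [Std.Antisymm le] {a b c : E}

theorem not_ltOf_of_le (h : le a b) : ¬ ltOf le b a :=
  fun h' => h'.2 (antisymm_of le h'.1 h)

variable [IsTrans E le]

theorem ltOf_of_le_of_ltOf (hab : le a b) (hbc : ltOf le b c) : ltOf le a c :=
  ⟨trans_of le hab hbc.1, fun hac => not_ltOf_of_le hab (hac ▸ hbc)⟩

theorem ltOf_of_ltOf_of_le (hab : ltOf le a b) (hbc : le b c) : ltOf le a c :=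
  ⟨trans_of le hab.1 hbc, fun hac => not_ltOf_of_le hbc (hac ▸ hab)⟩

end Hull

section Order

variable {s t : E → V} {le : E → E → Prop}

theorem U1.ltOf_of_eq (hP1 : U1 s t le) {a b : E} (h : t a = s b) : ltOf le a b :=
  hP1 a b (.single h)

theorem U1.disjoint_hull_inE_hull_outE [IsTrans E le] [Std.Antisymm le] (hP1 : U1 s t le)
    (v : V) : Disjoint (hull le (inE t v)) (hull le (outE s v)) :=
  Set.disjoint_left.2 fun _ ⟨_, _, _, hb, _, hyb⟩ ⟨_, ha, _, _, hay, _⟩ =>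
    not_ltOf_of_le (trans_of le hay hyb) (hP1.ltOf_of_eq (hb.trans ha.symm))

variable [Std.Refl le]

theorem U1.mem_hull_outE_of_eReach (hP1 : U1 s t le) {v : V} {a b y : E} (h : eReach s t a y)
    (ha : t a = v) (hb : s b = v) (hyb : le y b) : y ∈ hull le (outE s v) := by
  obtain ⟨c, hac, hcy⟩ := Relation.TransGen.head'_iff.1 h
  refine ⟨c, hac.symm.trans ha, b, hb, ?_, hyb⟩
  rcases Relation.reflTransGen_iff_eq_or_transGen.1 hcy with rfl | hcy
  exacts [refl_of le _, (hP1 c y hcy).1]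

theorem U1.mem_hull_inE_of_eReach (hP1 : U1 s t le) {v : V} {a b y : E} (h : eReach s t y b)
    (ha : t a = v) (hb : s b = v) (hay : le a y) : y ∈ hull le (inE t v) := by
  obtain ⟨c, hyc, hcb⟩ := Relation.TransGen.tail'_iff.1 h
  refine ⟨a, ha, c, hcb.trans hb, hay, ?_⟩
  rcases Relation.reflTransGen_iff_eq_or_transGen.1 hyc with rfl | hyc
  exacts [refl_of le _, (hP1 y c hyc).1]

variable [IsTrans E le] [Std.Antisymm le]

theorem P2.hull_inE_union_outE_subset (hP2 : P2 s t le) (hP1 : U1 s t le) (v : V) :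
    hull le (inE t v ∪ outE s v) ⊆ hull le (inE t v) ∪ hull le (outE s v) := by
  rintro y ⟨a, ha | ha, b, hb | hb, hay, hyb⟩
  · exact Or.inl ⟨a, ha, b, hb, hay, hyb⟩
  · by_cases hya : a = y
    · exact Or.inl (subset_hull _ (hya ▸ ha))
    by_cases hyb' : y = b
    · exact Or.inr (subset_hull _ (hyb' ▸ hb))
    rcases hP2 a y b ⟨hay, hya⟩ ⟨hyb, hyb'⟩ (.single (ha.trans hb.symm)) with h | h
    · exact Or.inr (hP1.mem_hull_outE_of_eReach h ha hb hyb)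
    · exact Or.inl (hP1.mem_hull_inE_of_eReach h ha hb hay)
  · exact absurd (hP1.ltOf_of_eq (hb.trans ha.symm)) (not_ltOf_of_le (trans_of le hay hyb))
  · exact Or.inr ⟨a, ha, b, hb, hay, hyb⟩

theorem P2.u2 (hP2 : P2 s t le) (hP1 : U1 s t le) : U2 s t le := fun v =>
  ⟨Set.disjoint_iff_inter_eq_empty.1 (hP1.disjoint_hull_inE_hull_outE v),
    (hP2.hull_inE_union_outE_subset hP1 v).antisymm
      (Set.union_subset (hull_mono Set.subset_union_left) (hull_mono Set.subset_union_right))⟩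

theorem P2.vReach_of_inE_inter_hull_inE (hP2 : P2 s t le) (hP1 : U1 s t le)
    (hprog : Progressive s t) {v₁ v₂ : V} (hne : v₁ ≠ v₂)
    (h : (inE t v₁ ∩ hull le (inE t v₂)).Nonempty) : vReach s t v₁ v₂ := by
  obtain ⟨e, he, a, ha, b, hb, hae, heb⟩ := h
  have he : t e = v₁ := he
  have hae' : ltOf le a e := ⟨hae, by rintro rfl; exact hne (he.symm.trans ha)⟩
  have hab : a ≠ b := by rintro rfl; exact hae'.2 (antisymm_of le hae heb)
  obtain ⟨f, hf⟩ : (outE s v₂).Nonempty := Set.nonempty_iff_ne_empty.2 fun hsink =>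
    hprog.not_isSource_or_isSink (Or.inr ha) (Or.inr hb) hab (Or.inr hsink)
  have hef : ltOf le e f := ltOf_of_le_of_ltOf heb (hP1.ltOf_of_eq (hb.trans hf.symm))
  rcases hP2 a e f hae' hef (.single (ha.trans hf.symm)) with h | h
  · exact absurd (hP1.mem_hull_outE_of_eReach h ha hf hef.1)
      (Set.disjoint_left.1 (hP1.disjoint_hull_inE_hull_outE v₂) ⟨a, ha, b, hb, hae, heb⟩)
  · rcases eReach_iff_eq_or_vReach.1 h with h | h
    · exact absurd (he.symm.trans (h.trans hf)) hne
    · rwa [he, hf] at h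

theorem P2.vReach_of_outE_inter_hull_outE (hP2 : P2 s t le) (hP1 : U1 s t le)
    (hprog : Progressive s t) {v₁ v₂ : V} (hne : v₁ ≠ v₂)
    (h : (outE s v₁ ∩ hull le (outE s v₂)).Nonempty) : vReach s t v₂ v₁ := by
  obtain ⟨e, he, a, ha, b, hb, hae, heb⟩ := h
  have he : s e = v₁ := he
  have heb' : ltOf le e b := ⟨heb, by rintro rfl; exact hne (he.symm.trans hb)⟩
  have hab : a ≠ b := by rintro rfl; exact heb'.2 (antisymm_of le heb hae)
  obtain ⟨f, hf⟩ : (inE t v₂).Nonempty := Set.nonempty_iff_ne_empty.2 fun hsource =>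
    hprog.not_isSource_or_isSink (Or.inl ha) (Or.inl hb) hab (Or.inl hsource)
  have hfe : ltOf le f e := ltOf_of_ltOf_of_le (hP1.ltOf_of_eq (hf.trans ha.symm)) hae
  rcases hP2 f e b hfe heb' (.single (hf.trans hb.symm)) with h | h
  · rcases eReach_iff_eq_or_vReach.1 h with h | h
    · exact absurd (he.symm.trans (h.symm.trans hf)) hne
    · rwa [hf, he] at h
  · exact absurd (hP1.mem_hull_inE_of_eReach h hf hb hfe.1)
      (Set.disjoint_right.1 (hP1.disjoint_hull_inE_hull_outE v₂) ⟨a, ha, b, hb, hae, heb⟩)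

theorem P2.p3 (hP2 : P2 s t le) (hP1 : U1 s t le) (hprog : Progressive s t) : P3 s t le :=
  fun _ _ hne => ⟨hP2.vReach_of_inE_inter_hull_inE hP1 hprog hne,
    hP2.vReach_of_outE_inter_hull_outE hP1 hprog hne⟩

end Order

section Converse

variable {s t : E → V} {le : E → E → Prop}

theorem P3.eq_or_vReach_of_mem_hull_inE (hP3 : P3 s t le) {v : V} {e : E}
    (he : e ∈ hull le (inE t v)) : t e = v ∨ vReach s t (t e) v :=
  or_iff_not_imp_left.2 fun hne => (hP3 _ _ hne).1 ⟨e, rfl, he⟩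

theorem P3.eq_or_vReach_of_mem_hull_outE (hP3 : P3 s t le) {v : V} {e : E}
    (he : e ∈ hull le (outE s v)) : s e = v ∨ vReach s t v (s e) :=
  or_iff_not_imp_left.2 fun hne => (hP3 _ _ hne).2 ⟨e, rfl, he⟩

theorem p2t_of_u2_of_p3 (hU2 : U2 s t le) (hP3 : P3 s t le) : P2t s t le := by
  intro e₁ e₂ e₃ h₁₂ h₂₃ h
  have h₂ : e₂ ∈ hull le (inE t (t e₁) ∪ outE s (t e₁)) :=
    ⟨e₁, Or.inl rfl, e₃, Or.inr h.symm, h₁₂.1, h₂₃.1⟩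
  rw [(hU2 (t e₁)).2] at h₂
  rcases h₂ with h₂ | h₂
  · rw [h] at h₂
    exact Or.inr (eReach_iff_eq_or_vReach.2 (hP3.eq_or_vReach_of_mem_hull_inE h₂))
  · exact Or.inl (eReach_iff_eq_or_vReach.2
      ((hP3.eq_or_vReach_of_mem_hull_outE h₂).imp_left Eq.symm))

theorem P2t.p2 [Std.Total le] (hP2t : P2t s t le) : P2 s t le := by
  intro e₁ e₂ e₃ h₁₂ h₂₃ h₁₃
  induction h₁₃ using Relation.TransGen.head_induction_on with
  | single h => exact hP2t _ _ _ h₁₂ h₂₃ h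
  | @head a c hac hc ih =>
    rcases eq_or_ne e₂ c with rfl | hne
    · exact Or.inl (.single hac)
    rcases total_of le e₂ c with h | h
    · exact (hP2t a e₂ c h₁₂ ⟨h, hne⟩ hac).imp id (·.trans hc)
    · exact (ih ⟨h, hne.symm⟩).imp (.head hac) id

end Converse

theorem P2_iff_U2_and_P3_general {V E : Type}
    (s t : E → V) (le : E → E → Prop) (hlin : IsLinearOrder E le)
    (hprog : Progressive s t) (hP1 : U1 s t le) :
    P2 s t le ↔ (U2 s t le ∧ P3 s t le) :=
  have := hlin
  ⟨fun hP2 => ⟨hP2.u2 hP1, hP2.p3 hP1 hprog⟩,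
    fun ⟨hU2, hP3⟩ => (p2t_of_u2_of_p3 hU2 hP3).p2⟩

/-- for a progressive graph with (P1): (P2) ↔ ((U2) and (P3)). -/
theorem P2_iff_U2_and_P3 {V E : Type} [Fintype V] [Fintype E]
    (s t : E → V) (le : E → E → Prop) (hlin : IsLinearOrder E le)
    (hprog : Progressive s t) (hP1 : U1 s t le) :
    P2 s t le ↔ (U2 s t le ∧ P3 s t le) :=
  P2_iff_U2_and_P3_general s t le hlin hprog hP1
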